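/- Let Y be a vector space with a shift-invariant metric, let R : Y ⇒ Y (constant in a second variable z) and T : Z ⇒ Y be multifunctions, and suppose (R, T) is locally sum-stable around (z̄, ȳ, w̄₁, w̄₂) and T has the Aubin property around (z̄, w̄₂) with constant D > 0. Then the map G : Y × Z ⇒ Y defined by G(y, z) := R(y) + T(z) has the Aubin property with respect to z uniformly in y around ((ȳ, z̄), w̄₁ + w̄₂) with constant D. That is, there are neighborhoods U of ȳ, V of z̄, W' of w̄₁ + w̄₂ such that for all y ∈ U and z₁, z₂ ∈ V, e((R(y) + T(z₁)) ∩ W', R(y) + T(z₂)) ≤ D d(z₁, z₂). -/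

import Mathlib

open Metric Set Filter Topology ENNReal

noncomputable def exc {α : Type*} [PseudoEMetricSpace α] (A B : Set α) : ℝ≥0∞ :=
  ⨆ a ∈ A, EMetric.infEdist a B

open Pointwise

/-!
Local sum-stability lets every point of `R y + T z₁` near `w̄₁ + w̄₂` be written as `a + b` with
`a ∈ R y` and `b ∈ T z₁` near `w̄₂`. Translating by `a` is an isometry, so the distance from
`a + b` to `R y + T z₂` is at most the distance from `b` to `T z₂`, which the Aubin property of
`T` bounds by `D d(z₁, z₂)`.
-/

section Excess

variable {α : Type*} [PseudoEMetricSpace α]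

lemma infEDist_le_exc {A B : Set α} {a : α} (ha : a ∈ A) : infEDist a B ≤ exc A B :=
  le_iSup₂ (f := fun a (_ : a ∈ A) => infEDist a B) a ha

lemma exc_le_iff {A B : Set α} {r : ℝ≥0∞} : exc A B ≤ r ↔ ∀ a ∈ A, infEDist a B ≤ r :=
  iSup₂_le_iff

lemma exc_mono_left {A A' B : Set α} (h : A ⊆ A') : exc A B ≤ exc A' B :=
  biSup_mono h

end Excess

section ShiftInvariant

variable {Y : Type*} [AddCommGroup Y] [PseudoMetricSpace Y]

lemma isometry_add_left_of_dist_add_right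
    (hshift : ∀ a b c : Y, dist (a + c) (b + c) = dist a b) (a : Y) : Isometry (a + ·) :=
  Isometry.of_dist_eq fun x y => by simpa only [add_comm a] using hshift x y a

lemma infEDist_add_le_of_mem (hshift : ∀ a b c : Y, dist (a + c) (b + c) = dist a b)
    {A B : Set Y} {a : Y} (ha : a ∈ A) (b : Y) : infEDist (a + b) (A + B) ≤ infEDist b B :=
  calc infEDist (a + b) (A + B)
      ≤ infEDist (a + b) ((a + ·) '' B) :=
        infEDist_anti (by rintro _ ⟨b', hb', rfl⟩; exact add_mem_add ha hb')
    _ = infEDist b B := infEDist_image (isometry_add_left_of_dist_add_right hshift a)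

lemma exc_add_left_le (hshift : ∀ a b c : Y, dist (a + c) (b + c) = dist a b)
    (A B B' : Set Y) : exc (A + B) (A + B') ≤ exc B B' := by
  refine exc_le_iff.2 ?_
  rintro _ ⟨a, ha, b, hb, rfl⟩
  exact (infEDist_add_le_of_mem hshift ha b).trans (infEDist_le_exc hb)

end ShiftInvariant

theorem stmt16_general {Y Z : Type*} [AddCommGroup Y] [MetricSpace Y] [MetricSpace Z]
    (hshift : ∀ a b c : Y, dist (a + c) (b + c) = dist a b)
    (R : Y → Set Y) (T : Z → Set Y)
    (ya w₁ : Y) (za : Z) (w₂ : Y)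
    (D : ℝ)
    (hstab : ∀ ε > (0:ℝ), ∃ δ > (0:ℝ), ∀ z ∈ Metric.ball za δ, ∀ y ∈ Metric.ball ya δ,
      ∀ w ∈ (R y + T z) ∩ Metric.ball (w₁ + w₂) δ,
        ∃ a ∈ R y ∩ Metric.ball w₁ ε, ∃ b ∈ T z ∩ Metric.ball w₂ ε, w = a + b)
    (hAubT : ∃ V ∈ 𝓝 za, ∃ W₂ ∈ 𝓝 w₂, ∀ z₁ ∈ V, ∀ z₂ ∈ V,
      exc (T z₁ ∩ W₂) (T z₂) ≤ ENNReal.ofReal (D * dist z₁ z₂)) :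
    ∃ U ∈ 𝓝 ya, ∃ V ∈ 𝓝 za, ∃ W' ∈ 𝓝 (w₁ + w₂), ∀ y ∈ U, ∀ z₁ ∈ V, ∀ z₂ ∈ V,
      exc ((R y + T z₁) ∩ W') (R y + T z₂) ≤ ENNReal.ofReal (D * dist z₁ z₂) := by
  obtain ⟨V, hV, W₂, hW₂, hAub⟩ := hAubT
  obtain ⟨ε, hε, hballW₂⟩ := Metric.mem_nhds_iff.1 hW₂
  obtain ⟨δ, hδ, hsplit⟩ := hstab ε hε
  refine ⟨ball ya δ, ball_mem_nhds _ hδ, V ∩ ball za δ, inter_mem hV (ball_mem_nhds _ hδ),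
    ball (w₁ + w₂) δ, ball_mem_nhds _ hδ, fun y hy z₁ hz₁ z₂ hz₂ => ?_⟩
  have hsub : (R y + T z₁) ∩ ball (w₁ + w₂) δ ⊆ R y + (T z₁ ∩ W₂) := by
    intro w hw
    obtain ⟨a, ⟨ha, -⟩, b, ⟨hb, hbW⟩, rfl⟩ := hsplit z₁ hz₁.2 y hy w hw
    exact add_mem_add ha ⟨hb, hballW₂ hbW⟩
  calc exc ((R y + T z₁) ∩ ball (w₁ + w₂) δ) (R y + T z₂)
      ≤ exc (R y + (T z₁ ∩ W₂)) (R y + T z₂) := exc_mono_left hsub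
    _ ≤ exc (T z₁ ∩ W₂) (T z₂) := exc_add_left_le hshift _ _ _
    _ ≤ ENNReal.ofReal (D * dist z₁ z₂) := hAub z₁ hz₁.1 z₂ hz₂.1

theorem stmt16 {Y Z : Type*} [AddCommGroup Y] [MetricSpace Y] [MetricSpace Z]
    (hshift : ∀ a b c : Y, dist (a + c) (b + c) = dist a b)
    (R : Y → Set Y) (T : Z → Set Y)
    (ya w₁ : Y) (za : Z) (w₂ : Y)
    (hR : w₁ ∈ R ya) (hT : w₂ ∈ T za)
    (D : ℝ) (hD : 0 < D)
    (hstab : ∀ ε > (0:ℝ), ∃ δ > (0:ℝ), ∀ z ∈ Metric.ball za δ, ∀ y ∈ Metric.ball ya δ,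
      ∀ w ∈ (R y + T z) ∩ Metric.ball (w₁ + w₂) δ,
        ∃ a ∈ R y ∩ Metric.ball w₁ ε, ∃ b ∈ T z ∩ Metric.ball w₂ ε, w = a + b)
    (hAubT : ∃ V ∈ 𝓝 za, ∃ W₂ ∈ 𝓝 w₂, ∀ z₁ ∈ V, ∀ z₂ ∈ V,
      exc (T z₁ ∩ W₂) (T z₂) ≤ ENNReal.ofReal (D * dist z₁ z₂)) :
    ∃ U ∈ 𝓝 ya, ∃ V ∈ 𝓝 za, ∃ W' ∈ 𝓝 (w₁ + w₂), ∀ y ∈ U, ∀ z₁ ∈ V, ∀ z₂ ∈ V,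
      exc ((R y + T z₁) ∩ W') (R y + T z₂) ≤ ENNReal.ofReal (D * dist z₁ z₂) :=
  stmt16_general hshift R T ya w₁ za w₂ D hstab hAubT
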